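/- Let (G,H) be an instance of the nonuniform sparsest cut problem on a finite vertex set V where H is a rank-1 graph with H̄(u,v) = μ(u)·μ(v) for a probability distribution μ. Let {x_v}_{v∈V} be a feasible solution to the Goemans–Linial relaxation for (G,H) of cost ε. Suppose there exists z ∈ V such that the ball B = {v : ‖x_z − x_v‖² ≤ 1/4} satisfies μ(B) ≥ 1/2. Then there exists a cut S ⊆ V with H̄(S) > 0 and sparsity σ(G,H;S) ≤ 8ε. -/

import Mathlib

/-!
Sweep along the line embedding `φ v = ‖x_z - x_v‖²`. The `ℓ₂²`-triangle inequality gives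
`|φ u - φ v| ≤ ‖x_u - x_v‖²`, so `Σ Ḡ(u,v) |φ u - φ v| ≤ ε`. In the other direction
`‖x_u - x_v‖² ≤ φ u + φ v`, so the normalization forces the `μ`-mean of `φ` to be at least `1/2`;
as `φ ≤ 1/4` on `B` and `μ(B) ≥ 1/2`, this gives `Σ μ(u) μ(v) |φ u - φ v| ≥ 1/8`. Integrating
over `t` the cut values of the threshold cuts `{φ ≤ t}` recovers exactly these two `ℓ₁` sums,
so some threshold cut has sparsity at most `ε / (1/8) = 8ε`.
-/

/-- Total weight (over ordered pairs) of a weighted graph. -/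
noncomputable def total {V : Type*} [Fintype V] (G : V → V → ℝ) : ℝ := ∑ u, ∑ v, G u v

/-- Weight of the edges of `G` crossing the cut `(S, V \ S)` (over ordered pairs). -/
noncomputable def cutval {V : Type*} [Fintype V] [DecidableEq V] (G : V → V → ℝ) (S : Finset V) : ℝ :=
  ∑ u, ∑ v, G u v * |(if u ∈ S then (1 : ℝ) else 0) - (if v ∈ S then (1 : ℝ) else 0)|

/-- Normalized cut weight `Ḡ(S)`. -/
noncomputable def ncut {V : Type*} [Fintype V] [DecidableEq V] (G : V → V → ℝ) (S : Finset V) : ℝ :=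
  cutval G S / total G

open MeasureTheory Finset

theorem exists_pos_and_le_mul_of_integral_le {α : Type*} [MeasurableSpace α] {m : Measure α}
    {f g : α → ℝ} {c : ℝ}
    (hf : Integrable f m) (hg : Integrable g m) (hf0 : 0 ≤ f) (hg0 : 0 ≤ g)
    (hfg : ∫ a, f a ∂m ≤ c * ∫ a, g a ∂m) (hg_pos : 0 < ∫ a, g a ∂m) :
    ∃ a, 0 < g a ∧ f a ≤ c * g a := by
  by_contra! hlt
  have hgap_nonneg : 0 ≤ fun a => f a - c * g a := fun a => by
    show 0 ≤ f a - c * g a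
    rcases (hg0 a).eq_or_lt with hga | hga
    · simp only [Pi.zero_apply] at hga
      rw [← hga, mul_zero, sub_zero]
      exact hf0 a
    · simpa using (hlt a hga).le
  have hgap_int : ∫ a, (f a - c * g a) ∂m = 0 := by
    refine le_antisymm ?_ (integral_nonneg hgap_nonneg)
    rw [integral_sub hf (hg.const_mul c), integral_const_mul]
    linarith
  have hgap_ae := (integral_eq_zero_iff_of_nonneg hgap_nonneg (hf.sub (hg.const_mul c))).1 hgap_int
  have hg_ae : g ≤ᵐ[m] 0 := hgap_ae.mono fun a ha => by
    by_contra! hga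
    have := hlt a hga
    simp only [Pi.zero_apply] at ha
    linarith
  linarith [integral_nonpos_of_ae hg_ae]

theorem abs_ite_le_sub_ite_le_eq_indicator (a b t : ℝ) :
    |(if a ≤ t then (1 : ℝ) else 0) - (if b ≤ t then 1 else 0)|
      = (Set.Ico (min a b) (max a b)).indicator 1 t := by
  simp only [Set.indicator_apply, Set.mem_Ico, min_le_iff, lt_max_iff, Pi.one_apply]
  by_cases ha : a ≤ t <;> by_cases hb : b ≤ t <;> simp [ha, hb]

theorem integrable_abs_ite_le_sub_ite_le (a b : ℝ) :
    Integrable fun t : ℝ => |(if a ≤ t then (1 : ℝ) else 0) - (if b ≤ t then 1 else 0)| := by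
  simp_rw [abs_ite_le_sub_ite_le_eq_indicator]
  exact (integrable_indicator_iff measurableSet_Ico).2 (integrableOn_const measure_Ico_lt_top.ne)

theorem integral_abs_ite_le_sub_ite_le (a b : ℝ) :
    ∫ t : ℝ, |(if a ≤ t then (1 : ℝ) else 0) - (if b ≤ t then 1 else 0)| = |a - b| := by
  simp_rw [abs_ite_le_sub_ite_le_eq_indicator]
  rw [integral_indicator_one measurableSet_Ico, Real.volume_real_Ico_of_le min_le_max,
    max_sub_min_eq_abs, abs_sub_comm]

section ThresholdCut

variable {V : Type*} [Fintype V] [DecidableEq V]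

noncomputable def thresholdCut (φ : V → ℝ) (t : ℝ) : Finset V := {v | φ v ≤ t}

theorem cutval_nonneg {w : V → V → ℝ} (hw : ∀ u v, 0 ≤ w u v) (S : Finset V) :
    0 ≤ cutval w S :=
  sum_nonneg fun u _ => sum_nonneg fun v _ => mul_nonneg (hw u v) (abs_nonneg _)

theorem cutval_thresholdCut (w : V → V → ℝ) (φ : V → ℝ) (t : ℝ) :
    cutval w (thresholdCut φ t)
      = ∑ u, ∑ v, w u v * |(if φ u ≤ t then (1 : ℝ) else 0) - (if φ v ≤ t then 1 else 0)| := by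
  simp [cutval, thresholdCut]

theorem integrable_cutval_thresholdCut (w : V → V → ℝ) (φ : V → ℝ) :
    Integrable fun t => cutval w (thresholdCut φ t) := by
  simp_rw [cutval_thresholdCut]
  exact integrable_finsetSum _ fun u _ => integrable_finsetSum _ fun v _ =>
    (integrable_abs_ite_le_sub_ite_le (φ u) (φ v)).const_mul _

theorem integral_cutval_thresholdCut (w : V → V → ℝ) (φ : V → ℝ) :
    ∫ t, cutval w (thresholdCut φ t) = ∑ u, ∑ v, w u v * |φ u - φ v| := by
  simp_rw [cutval_thresholdCut]
  rw [integral_finsetSum _ fun u _ => integrable_finsetSum _ fun v _ =>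
    (integrable_abs_ite_le_sub_ite_le (φ u) (φ v)).const_mul _]
  refine sum_congr rfl fun u _ => ?_
  rw [integral_finsetSum _ fun v _ => (integrable_abs_ite_le_sub_ite_le (φ u) (φ v)).const_mul _]
  simp_rw [integral_const_mul, integral_abs_ite_le_sub_ite_le]

theorem exists_thresholdCut_cutval_le_mul {w w' : V → V → ℝ} (hw : ∀ u v, 0 ≤ w u v)
    (hw' : ∀ u v, 0 ≤ w' u v) (φ : V → ℝ) {c : ℝ}
    (hle : ∑ u, ∑ v, w u v * |φ u - φ v| ≤ c * ∑ u, ∑ v, w' u v * |φ u - φ v|)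
    (hpos : 0 < ∑ u, ∑ v, w' u v * |φ u - φ v|) :
    ∃ t, 0 < cutval w' (thresholdCut φ t) ∧
      cutval w (thresholdCut φ t) ≤ c * cutval w' (thresholdCut φ t) := by
  rw [← integral_cutval_thresholdCut w, ← integral_cutval_thresholdCut w'] at hle
  rw [← integral_cutval_thresholdCut w'] at hpos
  exact exists_pos_and_le_mul_of_integral_le (integrable_cutval_thresholdCut w φ)
    (integrable_cutval_thresholdCut w' φ) (fun _ => cutval_nonneg hw _)
    (fun _ => cutval_nonneg hw' _) hle hpos

end ThresholdCut

theorem ncut_eq_cutval_div_total {V : Type*} [Fintype V] [DecidableEq V] (G : V → V → ℝ)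
    (S : Finset V) : ncut G S = cutval (fun u v => G u v / total G) S := by
  simp only [ncut, cutval, sum_div]
  exact sum_congr rfl fun u _ => sum_congr rfl fun v _ => div_mul_eq_mul_div _ _ _ |>.symm

section Semimetric

variable {V : Type*} {D : V → V → ℝ}
  (hsymm : ∀ u v, D u v = D v u) (htri : ∀ u v w, D u w ≤ D u v + D v w)
include hsymm htri

theorem abs_sub_le_of_triangle (z u v : V) : |D z u - D z v| ≤ D u v := by
  rw [abs_sub_le_iff]
  constructor <;> linarith [htri z v u, htri z u v, hsymm u v]

theorem le_add_of_triangle (z u v : V) : D u v ≤ D z u + D z v := by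
  linarith [htri u z v, hsymm u z]

theorem sum_sum_mul_le_two_mul_sum [Fintype V] {μ : V → ℝ} (hμ : ∀ v, 0 ≤ μ v)
    (hμsum : ∑ v, μ v = 1) (z : V) :
    ∑ u, ∑ v, μ u * μ v * D u v ≤ 2 * ∑ v, μ v * D z v := by
  calc ∑ u, ∑ v, μ u * μ v * D u v
      ≤ ∑ u, ∑ v, μ u * μ v * (D z u + D z v) :=
        sum_le_sum fun u _ => sum_le_sum fun v _ => mul_le_mul_of_nonneg_left
          (le_add_of_triangle hsymm htri z u v) (mul_nonneg (hμ u) (hμ v))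
    _ = (∑ v, μ v) * ∑ u, μ u * D z u + (∑ u, μ u) * ∑ v, μ v * D z v := by
        simp only [mul_add, sum_add_distrib, sum_mul, mul_sum]
        congr 1
        · exact sum_congr rfl fun u _ => sum_congr rfl fun v _ => by ring
        · rw [sum_comm]; exact sum_congr rfl fun u _ => sum_congr rfl fun v _ => by ring
    _ = 2 * ∑ v, μ v * D z v := by rw [hμsum]; ring

end Semimetric

/-- Each `u ∈ B` lies at least `m - r` below the `μ`-mean `m` of `φ`; the other rows of the
sum only add. -/
theorem sum_mul_mean_sub_le_sum_sum_abs_sub {V : Type*} [Fintype V] {μ : V → ℝ}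
    (hμ : ∀ v, 0 ≤ μ v) (hμsum : ∑ v, μ v = 1) (φ : V → ℝ) (B : Finset V) {r : ℝ}
    (hB : ∀ u ∈ B, φ u ≤ r) :
    (∑ u ∈ B, μ u) * (∑ v, μ v * φ v - r) ≤ ∑ u, ∑ v, μ u * μ v * |φ u - φ v| := by
  have hrow : ∀ u, μ u * (∑ v, μ v * φ v - φ u) ≤ ∑ v, μ u * μ v * |φ u - φ v| := fun u => by
    calc μ u * (∑ v, μ v * φ v - φ u) = ∑ v, μ u * μ v * (φ v - φ u) := by
          rw [mul_sub, mul_sum, ← mul_one (μ u * φ u), ← hμsum, mul_sum, ← sum_sub_distrib]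
          exact sum_congr rfl fun v _ => by ring
      _ ≤ ∑ v, μ u * μ v * |φ u - φ v| := sum_le_sum fun v _ => mul_le_mul_of_nonneg_left
          (abs_sub_comm (φ u) (φ v) ▸ le_abs_self _) (mul_nonneg (hμ u) (hμ v))
  calc (∑ u ∈ B, μ u) * (∑ v, μ v * φ v - r)
      ≤ ∑ u ∈ B, μ u * (∑ v, μ v * φ v - φ u) := by
        rw [sum_mul]
        exact sum_le_sum fun u hu => mul_le_mul_of_nonneg_left (by linarith [hB u hu]) (hμ u)
    _ ≤ ∑ u ∈ B, ∑ v, μ u * μ v * |φ u - φ v| := sum_le_sum fun u _ => hrow u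
    _ ≤ ∑ u, ∑ v, μ u * μ v * |φ u - φ v| :=
        sum_le_sum_of_subset_of_nonneg (subset_univ B) fun u _ _ =>
          sum_nonneg fun v _ => mul_nonneg (mul_nonneg (hμ u) (hμ v)) (abs_nonneg _)

theorem round_goemans_linial_ball_general {V : Type*} [Fintype V] [DecidableEq V]
    (G H : V → V → ℝ) (μ : V → ℝ) (ε : ℝ) (d : ℕ) (x : V → EuclideanSpace ℝ (Fin d))
    (hGnonneg : ∀ u v, 0 ≤ G u v)
    (hμnonneg : ∀ v, 0 ≤ μ v) (hμsum : ∑ v, μ v = 1)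
    (hrank1 : ∀ u v, H u v / total H = μ u * μ v)
    (htri : ∀ u v w : V, ‖x u - x w‖ ^ 2 ≤ ‖x u - x v‖ ^ 2 + ‖x v - x w‖ ^ 2)
    (hnorm : ∑ u, ∑ v, μ u * μ v * ‖x u - x v‖ ^ 2 = 1)
    (hcost : ∑ u, ∑ v, (G u v / total G) * ‖x u - x v‖ ^ 2 = ε)
    (z : V) (hball : (1 : ℝ) / 2 ≤ ∑ v with ‖x z - x v‖ ^ 2 ≤ 1 / 4, μ v) :
    ∃ S : Finset V, 0 < ncut H S ∧ ncut G S / ncut H S ≤ 8 * ε := by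
  have hsymm : ∀ u v, ‖x u - x v‖ ^ 2 = ‖x v - x u‖ ^ 2 := fun u v => by rw [norm_sub_rev]
  set φ : V → ℝ := fun v => ‖x z - x v‖ ^ 2
  have hGbar : ∀ u v, 0 ≤ G u v / total G := fun u v =>
    div_nonneg (hGnonneg u v) (sum_nonneg fun _ _ => sum_nonneg fun _ _ => hGnonneg _ _)
  have hμμ : ∀ u v, 0 ≤ μ u * μ v := fun u v => mul_nonneg (hμnonneg u) (hμnonneg v)
  have hε : 0 ≤ ε := hcost ▸ sum_nonneg fun u _ => sum_nonneg fun v _ =>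
    mul_nonneg (hGbar u v) (sq_nonneg _)
  have hspreadG : ∑ u, ∑ v, G u v / total G * |φ u - φ v| ≤ ε := hcost ▸
    sum_le_sum fun u _ => sum_le_sum fun v _ =>
      mul_le_mul_of_nonneg_left (abs_sub_le_of_triangle hsymm htri z u v) (hGbar u v)
  have hspreadH : 1 / 8 ≤ ∑ u, ∑ v, μ u * μ v * |φ u - φ v| := by
    have hmean := sum_sum_mul_le_two_mul_sum hsymm htri hμnonneg hμsum z
    have hball_spread := sum_mul_mean_sub_le_sum_sum_abs_sub hμnonneg hμsum φ
      {v | φ v ≤ 1 / 4} fun u hu => (mem_filter.1 hu).2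
    nlinarith
  obtain ⟨t, hpos, hle⟩ := exists_thresholdCut_cutval_le_mul hGbar hμμ φ (c := 8 * ε)
    (by nlinarith) (by linarith)
  have hH : ∀ S, ncut H S = cutval (fun u v => μ u * μ v) S := by
    simp [ncut_eq_cutval_div_total, hrank1]
  refine ⟨thresholdCut φ t, hH _ ▸ hpos, ?_⟩
  rwa [hH, ncut_eq_cutval_div_total, div_le_iff₀ hpos]

/-- Rounding the Goemans–Linial relaxation when a large measure of points is bunched up in a
small ball: if `H` is rank-1 with `H̄(u,v) = μ(u)μ(v)`, `{x_v}` is a feasible solution of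
cost `ε`, and some ball `B = {v : ‖x_z − x_v‖² ≤ 1/4}` has `μ(B) ≥ 1/2`, then there is a cut
of sparsity at most `8ε`. -/
theorem round_goemans_linial_ball {V : Type*} [Fintype V] [DecidableEq V]
    (G H : V → V → ℝ) (μ : V → ℝ) (ε : ℝ) (d : ℕ) (x : V → EuclideanSpace ℝ (Fin d))
    (hd : 1 ≤ d)
    (hGsymm : ∀ u v, G u v = G v u) (hGnonneg : ∀ u v, 0 ≤ G u v)
    (hHsymm : ∀ u v, H u v = H v u) (hHnonneg : ∀ u v, 0 ≤ H u v)
    (hGtot : 0 < total G) (hHtot : 0 < total H)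
    (hμnonneg : ∀ v, 0 ≤ μ v) (hμsum : ∑ v, μ v = 1)
    (hrank1 : ∀ u v, H u v / total H = μ u * μ v)
    (htri : ∀ u v w : V, ‖x u - x w‖ ^ 2 ≤ ‖x u - x v‖ ^ 2 + ‖x v - x w‖ ^ 2)
    (hnorm : ∑ u, ∑ v, μ u * μ v * ‖x u - x v‖ ^ 2 = 1)
    (hcost : ∑ u, ∑ v, (G u v / total G) * ‖x u - x v‖ ^ 2 = ε)
    (z : V) (hball : (1 : ℝ) / 2 ≤ ∑ v with ‖x z - x v‖ ^ 2 ≤ 1 / 4, μ v) :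
    ∃ S : Finset V, 0 < ncut H S ∧ ncut G S / ncut H S ≤ 8 * ε :=
  round_goemans_linial_ball_general G H μ ε d x hGnonneg hμnonneg hμsum hrank1 htri hnorm hcost z
    hball
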